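/- A c-edge-colored graph G is PC acyclic of type 3 if and only if G has no PC closed walk. -/

import Mathlib

open SimpleGraph

variable {V : Type*} {c : ℕ}

/-- The list of colors of the edges of a walk, in order. -/
def colorList (G : SimpleGraph V) (col : V → V → Fin c) {u v : V} (w : G.Walk u v) :
    List (Fin c) :=
  w.darts.map fun d => col d.toProd.1 d.toProd.2

/-- A walk is properly colored (as an open walk): consecutive edges have different colors. -/
def IsPCOpen (G : SimpleGraph V) (col : V → V → Fin c) {u v : V} (w : G.Walk u v) : Prop :=
  (colorList G col w).Chain' (· ≠ ·)

/-- A closed walk is properly colored: consecutive edges have different colors,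
including the last versus the first edge. -/
def IsPCClosed (G : SimpleGraph V) (col : V → V → Fin c) {u : V} (w : G.Walk u u) : Prop :=
  (colorList G col w ++ (colorList G col w).take 1).Chain' (· ≠ ·)

/-- `G` (with coloring `col`) has a properly colored cycle. -/
def HasPCCycle (G : SimpleGraph V) (col : V → V → Fin c) : Prop :=
  ∃ (u : V) (w : G.Walk u u), w.IsCycle ∧ IsPCClosed G col w

/-- `G` (with coloring `col`) has a properly colored closed trail. -/
def HasPCClosedTrail (G : SimpleGraph V) (col : V → V → Fin c) : Prop :=
  ∃ (u : V) (w : G.Walk u u), w.IsCircuit ∧ IsPCClosed G col w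

/-- `G` (with coloring `col`) has a properly colored closed walk. -/
def HasPCClosedWalk (G : SimpleGraph V) (col : V → V → Fin c) : Prop :=
  ∃ (u : V) (w : G.Walk u u), 0 < w.length ∧ IsPCClosed G col w

/-- A vertex all of whose incident edges have the same color. -/
def MonoVertex (G : SimpleGraph V) (col : V → V → Fin c) (z : V) : Prop :=
  ∀ v w, G.Adj z v → G.Adj z w → col z v = col z w

/-- An ordering (given by an injective ranking `r`) is of type 1 if every vertex sends
edges of only one color into each connected component of the subgraph induced by the
later vertices. -/
def Ordering1 (G : SimpleGraph V) (col : V → V → Fin c) (r : V → ℕ) : Prop :=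
  ∀ (u v w : V) (hv : G.Adj u v) (hw : G.Adj u w) (hrv : r u < r v) (hrw : r u < r w),
    (G.induce {x | r u < r x}).Reachable ⟨v, hrv⟩ ⟨w, hrw⟩ → col u v = col u w

/-- Type 2: all edges from a vertex to later vertices which are not bridges in the
subgraph induced by the vertex together with the later vertices have the same color. -/
def Ordering2 (G : SimpleGraph V) (col : V → V → Fin c) (r : V → ℕ) : Prop :=
  ∀ (u v w : V) (hv : G.Adj u v) (hw : G.Adj u w) (hrv : r u < r v) (hrw : r u < r w),
    ¬ (G.induce {x | r u ≤ r x}).IsBridge s(⟨u, le_refl (r u)⟩, ⟨v, hrv.le⟩) →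
    ¬ (G.induce {x | r u ≤ r x}).IsBridge s(⟨u, le_refl (r u)⟩, ⟨w, hrw.le⟩) →
    col u v = col u w

/-- Type 3: all edges from a vertex to later vertices have the same color. -/
def Ordering3 (G : SimpleGraph V) (col : V → V → Fin c) (r : V → ℕ) : Prop :=
  ∀ u v w : V, G.Adj u v → G.Adj u w → r u < r v → r u < r w → col u v = col u w

/-- Type 4: all edges to later vertices have the same color and all edges to earlier
vertices have the same color. -/
def Ordering4 (G : SimpleGraph V) (col : V → V → Fin c) (r : V → ℕ) : Prop :=
  Ordering3 G col r ∧
    ∀ u v w : V, G.Adj u v → G.Adj u w → r v < r u → r w < r u → col u v = col u w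

/-- Type 5: type 4, and additionally the color towards earlier vertices differs from the
color towards later vertices. -/
def Ordering5 (G : SimpleGraph V) (col : V → V → Fin c) (r : V → ℕ) : Prop :=
  Ordering4 G col r ∧
    ∀ u v w : V, G.Adj u v → G.Adj u w → r v < r u → r u < r w → col u v ≠ col u w

def PCAcyclic1 (G : SimpleGraph V) (col : V → V → Fin c) : Prop :=
  ∃ r : V → ℕ, Function.Injective r ∧ Ordering1 G col r

def PCAcyclic2 (G : SimpleGraph V) (col : V → V → Fin c) : Prop :=
  ∃ r : V → ℕ, Function.Injective r ∧ Ordering2 G col r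

def PCAcyclic3 (G : SimpleGraph V) (col : V → V → Fin c) : Prop :=
  ∃ r : V → ℕ, Function.Injective r ∧ Ordering3 G col r

def PCAcyclic4 (G : SimpleGraph V) (col : V → V → Fin c) : Prop :=
  ∃ r : V → ℕ, Function.Injective r ∧ Ordering4 G col r

def PCAcyclic5 (G : SimpleGraph V) (col : V → V → Fin c) : Prop :=
  ∃ r : V → ℕ, Function.Injective r ∧ Ordering5 G col r

/-- The number of `C`-monochromatic vertices of a closed walk `C`: vertices whose two
incident edges on `C` (cyclically) have the same color. -/
def monoCount (G : SimpleGraph V) (col : V → V → Fin c) {u : V} (w : G.Walk u u) : ℕ :=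
  ((colorList G col w ++ (colorList G col w).take 1).zip
      (colorList G col w ++ (colorList G col w).take 1).tail).countP
    fun p => decide (p.1 = p.2)

/-- The number of vertices of a closed walk `C` that are not `C`-monochromatic. -/
def nonMonoCount (G : SimpleGraph V) (col : V → V → Fin c) {u : V} (w : G.Walk u u) : ℕ :=
  ((colorList G col w ++ (colorList G col w).take 1).zip
      (colorList G col w ++ (colorList G col w).take 1).tail).countP
    fun p => decide (p.1 ≠ p.2)

/-!
Under a type 3 ordering, the vertex of least rank on a closed walk has both of its walk
neighbours later in the order, so its two walk edges share a colour and the walk is not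
properly coloured there.

Conversely, if no vertex is monochromatic, every dart `u → v` can be followed by a dart
`v → w` of another colour. Iterating this successor map on the finitely many darts
eventually returns to a dart, and the darts in between form a PC closed walk. So a graph
without PC closed walks has a monochromatic vertex; putting it first in front of a type 3
ordering of the remaining graph (which exists by induction) gives a type 3 ordering.
-/

section Colors

variable {G : SimpleGraph V} (col : V → V → Fin c)

@[simp]
lemma colorList_cons {u v w : V} (h : G.Adj u v) (p : G.Walk v w) :
    colorList G col (Walk.cons h p) = col u v :: colorList G col p := by
  simp [colorList]

@[simp]
lemma colorList_concat {u v w : V} (p : G.Walk u v) (h : G.Adj v w) :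
    colorList G col (p.concat h) = colorList G col p ++ [col v w] := by
  simp [colorList, Walk.darts_concat]

@[simp]
lemma colorList_copy {u v u' v' : V} (p : G.Walk u v) (hu : u = u') (hv : v = v') :
    colorList G col (p.copy hu hv) = colorList G col p := by
  subst hu hv; rfl

lemma colorList_map {W : Type*} {H : SimpleGraph W} (f : G →g H) (col' : W → W → Fin c)
    (hf : ∀ a b, col' (f a) (f b) = col a b) {u v : V} (p : G.Walk u v) :
    colorList H col' (p.map f) = colorList G col p := by
  simp [colorList, Walk.darts_map, hf]

lemma isPCClosed_iff_cycleChain {u : V} (w : G.Walk u u) :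
    IsPCClosed G col w ↔ Cycle.Chain (· ≠ ·) (colorList G col w : Cycle (Fin c)) := by
  unfold IsPCClosed
  cases colorList G col w with
  | nil => exact iff_of_true List.isChain_nil (Cycle.Chain.nil _)
  | cons a l => rfl

lemma isPCClosed_rotate [DecidableEq V] {u v : V} {w : G.Walk u u} (hv : v ∈ w.support) :
    IsPCClosed G col (w.rotate v hv) ↔ IsPCClosed G col w := by
  simp only [isPCClosed_iff_cycleChain, colorList]
  rw [Cycle.coe_eq_coe.mpr ((w.rotate_darts v hv).map _)]

lemma HasPCClosedWalk.map {W : Type*} {H : SimpleGraph W} (f : G →g H)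
    (col' : W → W → Fin c) (hf : ∀ a b, col' (f a) (f b) = col a b)
    (h : HasPCClosedWalk G col) : HasPCClosedWalk H col' := by
  obtain ⟨u, w, hlen, hpc⟩ := h
  refine ⟨f u, w.map f, by simpa using hlen, ?_⟩
  rwa [IsPCClosed, colorList_map col f col' hf]

end Colors

section Forward

variable {G : SimpleGraph V} {col : V → V → Fin c} {r : V → ℕ}

lemma not_isPCClosed_of_forall_lt (hsym : ∀ u v, col u v = col v u)
    (hord : Ordering3 G col r) {x : V} (w : G.Walk x x) (hw : 0 < w.length)
    (hmin : ∀ y ∈ w.support, y ≠ x → r x < r y) : ¬ IsPCClosed G col w := by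
  cases w with
  | nil => simp at hw
  | @cons _ a _ hxa p =>
    obtain ⟨b, q, hbx, hqp⟩ := Walk.exists_cons_eq_concat hxa p
    have ha := hmin _ (by simp) hxa.ne'
    have hb := hmin b (by simp [hqp]) hbx.ne
    have hcolors : colorList G col (Walk.cons hxa p) ++ (colorList G col (Walk.cons hxa p)).take 1
        = colorList G col q ++ [col b x, col x a] := by
      rw [colorList_cons, List.take_succ_cons, List.take_zero, ← colorList_cons col hxa, hqp,
        colorList_concat, List.append_assoc, List.singleton_append]
    intro hpc
    unfold IsPCClosed at hpc
    rw [hcolors] at hpc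
    have hlast : List.IsChain (· ≠ ·) [col b x, col x a] := hpc.right_of_append
    exact List.isChain_pair.mp hlast (by rw [hsym, hord _ _ _ hbx.symm hxa hb ha])

theorem not_hasPCClosedWalk_of_pcAcyclic3 (hsym : ∀ u v, col u v = col v u)
    (h : PCAcyclic3 G col) : ¬ HasPCClosedWalk G col := by
  classical
  rintro ⟨u, w, hw, hpc⟩
  obtain ⟨r, hr, hord⟩ := h
  obtain ⟨x, hx, hmin⟩ := Set.exists_min_image _ r (List.finite_toSet w.support)
    ⟨u, w.start_mem_support⟩
  exact not_isPCClosed_of_forall_lt hsym hord (w.rotate x hx) (by simpa using hw)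
    (fun y hy hyx => (hmin y (by simpa using hy)).lt_of_ne (hr.ne hyx.symm))
    ((isPCClosed_rotate col hx).mpr hpc)

end Forward

lemma List.isChain_iterate {α : Type*} {R : α → α → Prop} {f : α → α} (hf : ∀ a, R a (f a))
    (a : α) (n : ℕ) : List.IsChain R (List.iterate f a n) := by
  induction n generalizing a with
  | zero => exact List.isChain_nil
  | succ n ih =>
    cases n with
    | zero => exact List.isChain_singleton a
    | succ n => exact List.IsChain.cons_cons (hf a) (ih (f a))

section Backward

variable {G : SimpleGraph V} {col : V → V → Fin c}

def iterateWalk (next : G.Dart → G.Dart) (hnext : ∀ d, (next d).fst = d.snd) :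
    (n : ℕ) → (d : G.Dart) → G.Walk d.fst (next^[n] d).fst
  | 0, _ => Walk.nil
  | n + 1, d => Walk.cons d.adj ((iterateWalk next hnext n (next d)).copy (hnext d) rfl)

lemma darts_iterateWalk (next : G.Dart → G.Dart) (hnext : ∀ d, (next d).fst = d.snd)
    (n : ℕ) (d : G.Dart) :
    (iterateWalk next hnext n d).darts = List.iterate next d n := by
  induction n generalizing d with
  | zero => rfl
  | succ n ih => simp [iterateWalk, ih, hnext]

lemma hasPCClosedWalk_of_iterate_eq_self (next : G.Dart → G.Dart)
    (hnext : ∀ d, (next d).fst = d.snd)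
    (hcol : ∀ d, col d.fst d.snd ≠ col (next d).fst (next d).snd)
    {n : ℕ} (hn : 0 < n) {d : G.Dart} (hd : next^[n] d = d) : HasPCClosedWalk G col := by
  refine ⟨d.fst, (iterateWalk next hnext n d).copy rfl (by rw [hd]), ?_, ?_⟩
  · simpa [← Walk.length_darts, darts_iterateWalk] using hn
  · have hclosed : List.iterate next d n ++ (List.iterate next d n).take 1
        = List.iterate next d (n + 1) := by
      rw [List.take_iterate, List.iterate_add, hd, Nat.min_eq_left hn]
    rw [IsPCClosed, colorList_copy, colorList, darts_iterateWalk, ← List.map_take,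
      ← List.map_append, hclosed]
    exact (List.isChain_map _).mpr (List.isChain_iterate hcol d _)

theorem exists_monoVertex_of_not_hasPCClosedWalk [Finite V] [Nonempty V]
    (h : ¬ HasPCClosedWalk G col) : ∃ z, MonoVertex G col z := by
  by_contra! hmono
  have hstep (d : G.Dart) : ∃ d' : G.Dart, d'.fst = d.snd ∧
      col d.fst d.snd ≠ col d'.fst d'.snd := by
    obtain ⟨v, w, hv, hw, hvw⟩ : ∃ v w, G.Adj d.snd v ∧ G.Adj d.snd w ∧
        col d.snd v ≠ col d.snd w := by simpa [MonoVertex] using hmono d.snd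
    by_cases hcv : col d.fst d.snd = col d.snd v
    · exact ⟨⟨(d.snd, w), hw⟩, rfl, fun hcw => hvw (hcv.symm.trans hcw)⟩
    · exact ⟨⟨(d.snd, v), hv⟩, rfl, hcv⟩
  choose next hnext hcol using hstep
  obtain ⟨z⟩ := ‹Nonempty V›
  obtain ⟨v, -, hv, -⟩ : ∃ v w, G.Adj z v ∧ _ := by simpa [MonoVertex] using hmono z
  have : Finite G.Dart := Finite.of_injective _ Dart.toProd_injective
  obtain ⟨i, j, hij, hd⟩ := Set.finite_univ.exists_lt_map_eq_of_forall_mem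
    (f := fun k => next^[k] ⟨(z, v), hv⟩) fun _ => Set.mem_univ _
  refine h (hasPCClosedWalk_of_iterate_eq_self next hnext hcol (d := next^[i] ⟨(z, v), hv⟩)
    (Nat.sub_pos_of_lt hij) ?_)
  rw [← Function.iterate_add_apply, Nat.sub_add_cancel hij.le]
  exact hd.symm

lemma PCAcyclic3.of_monoVertex {z : V} (hz : MonoVertex G col z)
    (h : PCAcyclic3 (G.induce {z}ᶜ) fun a b => col a b) : PCAcyclic3 G col := by
  classical
  obtain ⟨r, hr, hord⟩ := h
  let rank : V → ℕ := fun x => if hx : x = z then 0 else r ⟨x, hx⟩ + 1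
  have rank_pos {x : V} (hx : x ≠ z) : rank x = r ⟨x, hx⟩ + 1 := dif_neg hx
  have rank_z : rank z = 0 := dif_pos rfl
  have ne_of_rank_lt {x y : V} (h : rank x < rank y) : y ≠ z := by
    rintro rfl
    simp [rank] at h
  refine ⟨rank, fun x y hxy => ?_, fun u v w huv huw hv hw => ?_⟩
  · by_cases hx : x = z <;> by_cases hy : y = z
    · exact hx.trans hy.symm
    · rw [hx, rank_z, rank_pos hy] at hxy
      omega
    · rw [hy, rank_z, rank_pos hx] at hxy
      omega
    · rw [rank_pos hx, rank_pos hy] at hxy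
      exact congrArg Subtype.val (@hr ⟨x, hx⟩ ⟨y, hy⟩ (by omega))
  · by_cases hu : u = z
    · subst hu
      exact hz v w huv huw
    have hv' := ne_of_rank_lt hv
    have hw' := ne_of_rank_lt hw
    rw [rank_pos hu, rank_pos hv'] at hv
    rw [rank_pos hu, rank_pos hw'] at hw
    exact hord ⟨u, hu⟩ ⟨v, hv'⟩ ⟨w, hw'⟩ huv huw (by omega) (by omega)

theorem pcAcyclic3_of_not_hasPCClosedWalk [Finite V] (h : ¬ HasPCClosedWalk G col) :
    PCAcyclic3 G col := by
  induction hn : Nat.card V generalizing V with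
  | zero =>
    have : IsEmpty V := Finite.card_eq_zero_iff.mp hn
    exact ⟨fun _ => 0, fun a => isEmptyElim a, fun a => isEmptyElim a⟩
  | succ n ih =>
    have : Nonempty V := Nat.card_pos_iff.mp (by omega) |>.1
    obtain ⟨z, hz⟩ := exists_monoVertex_of_not_hasPCClosedWalk h
    refine PCAcyclic3.of_monoVertex hz (ih (fun hc => h ?_) ?_)
    · exact hc.map _ (Embedding.induce _).toHom col fun _ _ => rfl
    · rw [Nat.card_coe_set_eq, Set.ncard_compl, Set.ncard_singleton, hn]
      rfl

end Backward

/-- A `c`-edge-colored graph `G` is PC acyclic of type 3 if and only if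
`G` has no PC closed walk. -/
theorem pcAcyclic3_iff_no_pc_closed_walk {V : Type*} [Fintype V] {c : ℕ}
    (G : SimpleGraph V) (col : V → V → Fin c) (hsym : ∀ u v, col u v = col v u) :
    PCAcyclic3 G col ↔ ¬ HasPCClosedWalk G col :=
  ⟨not_hasPCClosedWalk_of_pcAcyclic3 hsym, pcAcyclic3_of_not_hasPCClosedWalk⟩
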